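/- Until distributes over conjunction in its left argument: for all formulas φ_1, φ_2, ψ, trace λ, and index i, [[(φ_1 ∧ φ_2) U ψ, i]](λ) = min([[φ_1 U ψ, i]](λ), [[φ_2 U ψ, i]](λ)). -/

import Mathlib

namespace QLTLf

/-- Syntax of LTLf[F] formulas over a set `P` of atoms. -/
inductive Formula (P : Type) where
  | tru  : Formula P
  | atom : P → Formula P
  | neg  : Formula P → Formula P
  | conj : Formula P → Formula P → Formula P
  | next : Formula P → Formula P
  | untl : Formula P → Formula P → Formula P
  | rels : Formula P → Formula P → Formula P

/-- Maximum of a list of reals, with the empty maximum equal to 0. -/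
def sup0 (l : List ℝ) : ℝ := l.foldr max 0

/-- Minimum of a list of reals, with the empty minimum equal to 1. -/
def inf1 (l : List ℝ) : ℝ := l.foldr min 1

/-- The list of indices j with i ≤ j ≤ n. -/
def idxTo (i n : ℕ) : List ℕ := List.range' i (n + 1 - i)

/-- The list of indices k with i ≤ k < j. -/
def idxLt (i j : ℕ) : List ℕ := List.range' i (j - i)

/-- Quantitative LTLf semantics `[[φ, i]](λ)` on a finite trace of length `n`
with labelling `L` (position `i`, atom `p` ↦ `L i p`). -/
def eval {P : Type} (L : ℕ → P → ℝ) (n : ℕ) : Formula P → ℕ → ℝ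
  | .tru, _ => 1
  | .atom p, i => L i p
  | .neg φ, i => 1 - eval L n φ i
  | .conj φ ψ, i => min (eval L n φ i) (eval L n ψ i)
  | .next φ, i => if i < n then eval L n φ (i + 1) else 0
  | .untl φ ψ, i => sup0 ((idxTo i n).map fun j =>
      min (eval L n ψ j) (inf1 ((idxLt i j).map fun k => eval L n φ k)))
  | .rels φ ψ, i => inf1 ((idxTo i n).map fun j =>
      max (eval L n ψ j) (sup0 ((idxLt i j).map fun k => eval L n φ k)))

/-- Falsum, `⊥ := ¬⊤`. -/
def fls {P : Type} : Formula P := .neg .tru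

/-- Disjunction, derived; its evaluation is the fuzzy max. -/
def disj {P : Type} (φ ψ : Formula P) : Formula P := .neg (.conj (.neg φ) (.neg ψ))

/-- Eventually, `F φ := ⊤ U φ`. -/
def Fev {P : Type} (φ : Formula P) : Formula P := .untl .tru φ

/-- Always, `G φ := ⊥ R φ`. -/
def Gal {P : Type} (φ : Formula P) : Formula P := .rels fls φ

end QLTLf

namespace QLTLf

lemma sup0_nonneg (l : List ℝ) : 0 ≤ sup0 l := by
  induction l with
  | nil => simp [sup0]
  | cons a l ih => simp only [sup0, List.foldr] at *; exact le_max_of_le_right ih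

lemma le_sup0 {a : ℝ} {l : List ℝ} (h : a ∈ l) : a ≤ sup0 l := by
  induction l with
  | nil => simp at h
  | cons b l ih =>
    rcases List.mem_cons.1 h with rfl | h
    · exact le_max_left _ _
    · exact le_max_of_le_right (ih h)

lemma sup0_le {l : List ℝ} {c : ℝ} (h : ∀ a ∈ l, a ≤ c) (hc : 0 ≤ c) : sup0 l ≤ c := by
  induction l with
  | nil => simpa [sup0]
  | cons a l ih =>
    simp only [sup0, List.foldr]
    exact max_le (h a (by simp)) (ih fun a ha => h a (by simp [ha]))

lemma sup0_cases (l : List ℝ) : sup0 l ≤ 0 ∨ ∃ a ∈ l, sup0 l = a := by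
  induction l with
  | nil => simp [sup0]
  | cons a l ih =>
    have : sup0 (a :: l) = max a (sup0 l) := rfl
    rcases le_total a (sup0 l) with h | h
    · rw [this, max_eq_right h]
      rcases ih with h' | ⟨b, hb, he⟩
      · exact .inl h'
      · exact .inr ⟨b, by simp [hb], he⟩
    · exact .inr ⟨a, by simp, by rw [this, max_eq_left h]⟩

lemma inf1_le_one (l : List ℝ) : inf1 l ≤ 1 := by
  induction l with
  | nil => simp [inf1]
  | cons a l ih => exact min_le_of_right_le ih

lemma inf1_append (l m : List ℝ) : inf1 (l ++ m) = min (inf1 l) (inf1 m) := by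
  induction l with
  | nil =>
    simp only [List.nil_append, inf1, List.foldr]
    exact (min_eq_right (inf1_le_one m)).symm
  | cons a l ih =>
    simp only [List.cons_append, inf1, List.foldr, List.append_eq] at *
    rw [ih, min_assoc]

lemma inf1_map_min (f g : ℕ → ℝ) (l : List ℕ) :
    inf1 (l.map fun k => min (f k) (g k)) = min (inf1 (l.map f)) (inf1 (l.map g)) := by
  induction l with
  | nil => simp [inf1]
  | cons a l ih =>
    simp only [List.map_cons, inf1, List.foldr] at *
    rw [ih]
    exact min_min_min_comm _ _ _ _

lemma idxLt_antitone (f : ℕ → ℝ) {i j₁ j₂ : ℕ} (h1 : i ≤ j₁) (h2 : j₁ ≤ j₂) :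
    inf1 ((idxLt i j₂).map f) ≤ inf1 ((idxLt i j₁).map f) := by
  have : idxLt i j₂ = idxLt i j₁ ++ List.range' j₁ (j₂ - j₁) := by
    unfold idxLt
    have := List.range'_append_1 (s := i) (m := j₁ - i) (n := j₂ - j₁)
    rw [show i + (j₁ - i) = j₁ by omega, show j₁ - i + (j₂ - j₁) = j₂ - i by omega] at this
    exact this.symm
  rw [this, List.map_append, inf1_append]
  exact min_le_left _ _

end QLTLf

namespace QLTLf

lemma mem_idxTo {i n j : ℕ} (h : j ∈ idxTo i n) : i ≤ j := by
  simp only [idxTo, List.mem_range'_1] at h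
  exact h.1

lemma sup0_min_distrib (E A B : ℕ → ℝ) (i n : ℕ)
    (hA : ∀ j₁ j₂, i ≤ j₁ → j₁ ≤ j₂ → A j₂ ≤ A j₁)
    (hB : ∀ j₁ j₂, i ≤ j₁ → j₁ ≤ j₂ → B j₂ ≤ B j₁) :
    sup0 ((idxTo i n).map fun j => min (E j) (min (A j) (B j)))
      = min (sup0 ((idxTo i n).map fun j => min (E j) (A j)))
            (sup0 ((idxTo i n).map fun j => min (E j) (B j))) := by
  apply le_antisymm
  · refine le_min ?_ ?_ <;>
    · refine sup0_le ?_ (sup0_nonneg _)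
      intro a ha
      rcases List.mem_map.1 ha with ⟨j, hj, rfl⟩
      refine le_trans ?_ (le_sup0 (List.mem_map.2 ⟨j, hj, rfl⟩))
      exact min_le_min le_rfl (by simp)
  · rcases sup0_cases ((idxTo i n).map fun j => min (E j) (A j)) with h | ⟨a, ha, hea⟩
    · exact le_trans (le_trans (min_le_left _ _) h) (sup0_nonneg _)
    rcases sup0_cases ((idxTo i n).map fun j => min (E j) (B j)) with h | ⟨b, hb, heb⟩
    · exact le_trans (le_trans (min_le_right _ _) h) (sup0_nonneg _)
    obtain ⟨j₁, hj₁, rfl⟩ := List.mem_map.1 ha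
    obtain ⟨j₂, hj₂, rfl⟩ := List.mem_map.1 hb
    rw [hea, heb]
    rcases le_total j₁ j₂ with h | h
    · refine le_trans ?_ (le_sup0 (List.mem_map.2 ⟨j₁, hj₁, rfl⟩))
      refine le_min (le_trans (min_le_left _ _) (min_le_left _ _))
        (le_min (le_trans (min_le_left _ _) (min_le_right _ _))
          (le_trans (min_le_right _ _)
            (le_trans (min_le_right _ _) (hB j₁ j₂ (mem_idxTo hj₁) h))))
    · refine le_trans ?_ (le_sup0 (List.mem_map.2 ⟨j₂, hj₂, rfl⟩))
      refine le_min (le_trans (min_le_right _ _) (min_le_left _ _))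
        (le_min (le_trans (min_le_left _ _)
            (le_trans (min_le_right _ _) (hA j₂ j₁ (mem_idxTo hj₂) h)))
          (le_trans (min_le_right _ _) (min_le_right _ _)))

end QLTLf

open QLTLf in
theorem eval_untl_conj_left' (P : Type) (L : ℕ → P → ℝ) (n : ℕ)
    (φ₁ φ₂ ψ : Formula P) (i : ℕ) :
    eval L n (.untl (.conj φ₁ φ₂) ψ) i
      = min (eval L n (.untl φ₁ ψ) i) (eval L n (.untl φ₂ ψ) i) := by
  show sup0 _ = min (sup0 _) (sup0 _)
  have hmap : ((idxTo i n).map fun j =>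
      min (eval L n ψ j) (inf1 ((idxLt i j).map fun k => eval L n (.conj φ₁ φ₂) k)))
      = (idxTo i n).map fun j => min (eval L n ψ j)
          (min (inf1 ((idxLt i j).map fun k => eval L n φ₁ k))
               (inf1 ((idxLt i j).map fun k => eval L n φ₂ k))) := by
    refine List.map_congr_left fun j _ => ?_
    rw [show (fun k => eval L n (.conj φ₁ φ₂) k)
        = fun k => min (eval L n φ₁ k) (eval L n φ₂ k) from rfl, inf1_map_min]
  rw [hmap]
  exact sup0_min_distrib _ _ _ i n
    (fun j₁ j₂ h1 h2 => idxLt_antitone _ h1 h2)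
    (fun j₁ j₂ h1 h2 => idxLt_antitone _ h1 h2)

open QLTLf in
/-- Until distributes over conjunction in its left argument. -/
theorem eval_untl_conj_left (P : Type) (L : ℕ → P → ℝ) (n : ℕ)
    (hL : ∀ i p, L i p ∈ Set.Icc (0 : ℝ) 1)
    (φ₁ φ₂ ψ : Formula P) (i : ℕ) (hi1 : 1 ≤ i) (hin : i ≤ n) :
    eval L n (.untl (.conj φ₁ φ₂) ψ) i
      = min (eval L n (.untl φ₁ ψ) i) (eval L n (.untl φ₂ ψ) i) := eval_untl_conj_left' P L n φ₁ φ₂ ψ i
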